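/- Let Σ be a generable set of d-dimensional nonsingular cones in ℤ^d, let B be a d×n integer matrix, and for 1 ≤ i < j ≤ n let B[i;j] denote the d×2 submatrix of B consisting of the columns with indices i and j. Define BadPair_B(Σ) = {(i,j) : 1 ≤ i < j ≤ n and B[i;j] is not Σ-good}. Then for any standard blow-up Σ̃ of Σ, one has BadPair_B(Σ̃) ⊆ BadPair_B(Σ). -/
import Mathlib


open Finset

/-- The cone in `ℝ^d` generated (over the nonnegative reals) by a finite set of
integer vectors. -/
def coneOf {d : ℕ} (S : Finset (Fin d → ℤ)) : Set (Fin d → ℝ) :=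
  {x | ∃ c : (Fin d → ℤ) → ℝ, (∀ v, 0 ≤ c v) ∧ x = ∑ v ∈ S, c v • (fun l => (v l : ℝ))}

/-- `S` is the set of primitive edge generators of a `d`-dimensional nonsingular cone in
`ℤ^d`, i.e. `S` consists of `d` vectors forming a `ℤ`-basis of `ℤ^d`.  We identify such a
cone with its finite set of edge generators, an edge with its unique primitive generator. -/
def IsNsCone (d : ℕ) (S : Finset (Fin d → ℤ)) : Prop :=
  S.card = d ∧ Submodule.span ℤ (S : Set (Fin d → ℤ)) = ⊤

/-- The set of edges `E(Σ)` of a finite set of cones, each cone being given by its finite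
set of edge generators. -/
def edges {d : ℕ} (F : Finset (Finset (Fin d → ℤ))) : Finset (Fin d → ℤ) :=
  F.biUnion id

/-- A finite set of (`d`-dimensional nonsingular) cones is generable if the collection of
all the faces of all its cones is a fan: the intersection of any two such faces is again a
face of both.  A face of a cone corresponds to a subset of its set of edge generators. -/
def IsGenerable {d : ℕ} (F : Finset (Finset (Fin d → ℤ))) : Prop :=
  ∀ σ ∈ F, ∀ σ' ∈ F, ∀ s ⊆ σ, ∀ s' ⊆ σ',
    (∃ t ⊆ σ, coneOf s ∩ coneOf s' = coneOf t) ∧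
    (∃ t' ⊆ σ', coneOf s ∩ coneOf s' = coneOf t')

/-- The standard blow-up of `F` along the edges `ε₁, ε₂`: every cone `σ` containing both
`ε₁` and `ε₂` is replaced by the two cones `σ(ε₁)` and `σ(ε₂)` (where `σ(εᵢ)` is generated
by `ε₁ + ε₂` together with the edges of `σ` other than `ε_j`, `{i,j} = {1,2}`), and all
other cones are kept. -/
def blowUp {d : ℕ} (F : Finset (Finset (Fin d → ℤ))) (ε₁ ε₂ : Fin d → ℤ) :
    Finset (Finset (Fin d → ℤ)) :=
  F.filter (fun σ => ¬(ε₁ ∈ σ ∧ ε₂ ∈ σ)) ∪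
    (F.filter (fun σ => ε₁ ∈ σ ∧ ε₂ ∈ σ)).biUnion
      (fun σ => {insert (ε₁ + ε₂) (σ.erase ε₂), insert (ε₁ + ε₂) (σ.erase ε₁)})

/-- For a `d × n` integer matrix `B` and an edge with primitive generator `ε`,
`bEdge B ε i = Σ_j ε_j b_{j i}`. -/
def bEdge {d n : ℕ} (B : Matrix (Fin d) (Fin n) ℤ) (ε : Fin d → ℤ) (i : Fin n) : ℤ :=
  ∑ j, ε j * B j i

/-- `B` is `σ`-good: there is a permutation `γ` of the column indices such that
`b_{ε γ(1)} ≤ ⋯ ≤ b_{ε γ(n)}` for every edge `ε` of `σ`. -/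
def GoodCone {d n : ℕ} (B : Matrix (Fin d) (Fin n) ℤ) (σ : Finset (Fin d → ℤ)) : Prop :=
  ∃ γ : Equiv.Perm (Fin n), ∀ ε ∈ σ, Monotone fun i => bEdge B ε (γ i)

/-- `B` is `Σ`-good: it is `σ`-good for every `σ ∈ Σ`. -/
def GoodFan {d n : ℕ} (B : Matrix (Fin d) (Fin n) ℤ) (F : Finset (Finset (Fin d → ℤ))) :
    Prop :=
  ∀ σ ∈ F, GoodCone B σ

/-- `B[i;j]`: the `d × 2` submatrix of `B` consisting of columns `i` and `j`. -/
def colPair {d n : ℕ} (B : Matrix (Fin d) (Fin n) ℤ) (i j : Fin n) :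
    Matrix (Fin d) (Fin 2) ℤ :=
  Matrix.of fun k l => B k (if l = 0 then i else j)

/-- `BadPair_B(Σ) = {(i,j) : i < j and B[i;j] is not Σ-good}`. -/
def BadPairs {d n : ℕ} (B : Matrix (Fin d) (Fin n) ℤ)
    (F : Finset (Finset (Fin d → ℤ))) : Set (Fin n × Fin n) :=
  {p | p.1 < p.2 ∧ ¬ GoodFan (colPair B p.1 p.2) F}

/-- for any standard blow-up `Σ̃` of `Σ`,
`BadPair_B(Σ̃) ⊆ BadPair_B(Σ)`. -/
theorem stmt6 (d n : ℕ) (F : Finset (Finset (Fin d → ℤ)))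
    (hns : ∀ σ ∈ F, IsNsCone d σ) (hgen : IsGenerable F)
    (B : Matrix (Fin d) (Fin n) ℤ)
    (ε₁ ε₂ : Fin d → ℤ) (hne : ε₁ ≠ ε₂)
    (h1 : ε₁ ∈ edges F) (h2 : ε₂ ∈ edges F)
    (hmeet : ∃ σ ∈ F, ε₁ ∈ σ ∧ ε₂ ∈ σ) :
    BadPairs B (blowUp F ε₁ ε₂) ⊆ BadPairs B F := by
  rintro ⟨i, j⟩ ⟨hij, hbad⟩
  refine ⟨hij, fun hgood => hbad ?_⟩
  intro σ hσ
  simp only [blowUp, mem_union, mem_filter, mem_biUnion, mem_insert, mem_singleton] at hσ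
  rcases hσ with ⟨hF, _⟩ | ⟨τ, ⟨hτF, hτ1, hτ2⟩, hσ⟩
  · exact hgood σ hF
  · obtain ⟨γ, hγ⟩ := hgood τ hτF
    refine ⟨γ, fun ε hε => ?_⟩
    have hcases : ε = ε₁ + ε₂ ∨ ε ∈ τ := by
      rcases hσ with rfl | rfl <;> rcases Finset.mem_insert.1 hε with h | h <;>
        simp_all [Finset.mem_erase]
    rcases hcases with rfl | hmem
    · have hadd : ∀ k, bEdge (colPair B i j) (ε₁ + ε₂) k =
          bEdge (colPair B i j) ε₁ k + bEdge (colPair B i j) ε₂ k := by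
        intro k
        simp [bEdge, add_mul, Finset.sum_add_distrib]
      simpa [hadd] using Monotone.add (hγ ε₁ hτ1) (hγ ε₂ hτ2)
    · exact hγ ε hmem
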